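/- Let x_n, x ∈ D([0,1],ℝ) with d_{M₂}(x_n, x) → 0, and let t ∈ (0,1) be a continuity point of x. Then x_n(t_n) → x(t) for every sequence t_n → t; in particular x_n converges to x uniformly on compact subintervals of [0,1] consisting of continuity points of x. -/

import Mathlib

open MeasureTheory Filter Topology Set

noncomputable section

/-- Càdlàg functions from `[0,1]` to `ℝ` (encoded as functions on `ℝ`, right-continuous
on `[0,1)` with left limits on `(0,1]`). -/
structure Cadlag : Type where
  f : ℝ → ℝ
  rightCont : ∀ t ∈ Set.Ico (0:ℝ) 1, Filter.Tendsto f (nhdsWithin t (Set.Ioi t)) (nhds (f t))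
  leftLimExists : ∀ t ∈ Set.Ioc (0:ℝ) 1,
    ∃ L, Filter.Tendsto f (nhdsWithin t (Set.Iio t)) (nhds L)

namespace Cadlag

/-- Left limit `x(t-)`, with the convention `x(0-) = x(0)`. -/
def lft (x : Cadlag) (t : ℝ) : ℝ := if t ≤ 0 then x.f 0 else Function.leftLim x.f t

/-- The set of discontinuity points of `x` in `(0,1]`. -/
def Disc (x : Cadlag) : Set ℝ := {t | t ∈ Set.Ioc (0:ℝ) 1 ∧ x.lft t ≠ x.f t}

/-- The completed graph `Γ_x`. -/
def graph (x : Cadlag) : Set (ℝ × ℝ) :=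
  {p | p.1 ∈ Set.Icc (0:ℝ) 1 ∧ p.2 ∈ Set.uIcc (x.lft p.1) (x.f p.1)}

/-- The order on the completed graph `Γ_x`. -/
def graphLE (x : Cadlag) (a b : ℝ × ℝ) : Prop :=
  a.1 < b.1 ∨ (a.1 = b.1 ∧ |x.lft a.1 - a.2| ≤ |x.lft b.1 - b.2|)

/-- A parametric representation of the completed graph `Γ_x`: a continuous
nondecreasing surjection `[0,1] → Γ_x`. -/
structure ParamRep (x : Cadlag) where
  r : ℝ → ℝ
  u : ℝ → ℝ
  contR : ContinuousOn r (Set.Icc 0 1)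
  contU : ContinuousOn u (Set.Icc 0 1)
  mono : ∀ s ∈ Set.Icc (0:ℝ) 1, ∀ t ∈ Set.Icc (0:ℝ) 1, s ≤ t →
    x.graphLE (r s, u s) (r t, u t)
  maps : ∀ s ∈ Set.Icc (0:ℝ) 1, (r s, u s) ∈ x.graph
  surj : ∀ p ∈ x.graph, ∃ s ∈ Set.Icc (0:ℝ) 1, (r s, u s) = p

end Cadlag

/-- The Skorohod `M₁` metric on `D([0,1],ℝ)`. -/
def dM1 (x y : Cadlag) : ℝ :=
  ⨅ (p : x.ParamRep) (q : y.ParamRep),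
    ⨆ t : Set.Icc (0:ℝ) 1, max |p.r t - q.r t| |p.u t - q.u t|

/-- The Skorohod `M₂` metric (Hausdorff distance between completed graphs). -/
def dM2 (x y : Cadlag) : ℝ :=
  max (⨆ a : x.graph, ⨅ b : y.graph,
        max |(a : ℝ × ℝ).1 - (b : ℝ × ℝ).1| |(a : ℝ × ℝ).2 - (b : ℝ × ℝ).2|)
      (⨆ a : y.graph, ⨅ b : x.graph,
        max |(a : ℝ × ℝ).1 - (b : ℝ × ℝ).1| |(a : ℝ × ℝ).2 - (b : ℝ × ℝ).2|)

/-- The Skorohod `J₁` metric on `D([0,1],ℝ)`. -/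
def dJ1 (x y : Cadlag) : ℝ :=
  ⨅ l : {l : ℝ → ℝ // ContinuousOn l (Set.Icc 0 1) ∧ StrictMonoOn l (Set.Icc 0 1) ∧
      Set.MapsTo l (Set.Icc 0 1) (Set.Icc 0 1) ∧ l 0 = 0 ∧ l 1 = 1},
    ⨆ t : Set.Icc (0:ℝ) 1, max |l.1 t - (t : ℝ)| |x.f (l.1 t) - y.f t|

/-!
Over a time `u`, the completed graph `Γ_x` is the segment between `x(u-)` and `x(u)`; near a
continuity point `s` of `x` both ends are close to `x(s)`, so every point of `Γ_x` above a time
near `s` has height near `x(s)`. If `d_{M₂}(xₙ, x) < η`, the point `(u, xₙ(u))` of `Γ_{xₙ}` lies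
within `η` of a point of `Γ_x`, whose height is therefore near `x(s)` when `u` is near `s`.
A Lebesgue number for the cover of a compact set of continuity points by such neighbourhoods
makes the estimate uniform.
-/

open Metric Bornology

namespace Cadlag

variable (x : Cadlag)

theorem tendsto_lft {s : ℝ} (hs : s ∈ Ioc (0:ℝ) 1) :
    Tendsto x.f (𝓝[<] s) (𝓝 (x.lft s)) := by
  obtain ⟨L, hL⟩ := x.leftLimExists s hs
  rwa [lft, if_neg (not_le.2 hs.1), leftLim_eq_of_tendsto hL]

theorem lft_eq_of_notMem_disc {s : ℝ} (hs : s ∈ Icc (0:ℝ) 1) (hc : s ∉ x.Disc) :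
    x.lft s = x.f s := by
  rcases hs.1.eq_or_lt with rfl | hs0
  · simp [lft]
  · by_contra hne
    exact hc ⟨⟨hs0, hs.2⟩, hne⟩

theorem eventually_nhdsLT {s : ℝ} (hs : s ∈ Icc (0:ℝ) 1) {C : Set ℝ} (hC : C ∈ 𝓝 (x.lft s)) :
    ∀ᶠ u in 𝓝[<] s, u ∈ Icc (0:ℝ) 1 → x.f u ∈ C := by
  rcases hs.1.eq_or_lt with rfl | hs0
  · filter_upwards [self_mem_nhdsWithin] with u hu hu01
    exact absurd hu01.1 (not_le.2 hu)
  · filter_upwards [x.tendsto_lft ⟨hs0, hs.2⟩ hC] with u hu _ using hu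

theorem eventually_nhdsGT {s : ℝ} (hs : s ∈ Icc (0:ℝ) 1) {C : Set ℝ} (hC : C ∈ 𝓝 (x.f s)) :
    ∀ᶠ u in 𝓝[>] s, u ∈ Icc (0:ℝ) 1 → x.f u ∈ C := by
  rcases hs.2.lt_or_eq with hs1 | rfl
  · filter_upwards [x.rightCont s ⟨hs.1, hs1⟩ hC] with u hu _ using hu
  · filter_upwards [self_mem_nhdsWithin] with u hu hu01
    exact absurd hu01.2 (not_le.2 hu)

theorem eventually_nhds {s : ℝ} (hs : s ∈ Icc (0:ℝ) 1) {C : Set ℝ} (hl : C ∈ 𝓝 (x.lft s))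
    (hr : C ∈ 𝓝 (x.f s)) : ∀ᶠ u in 𝓝 s, u ∈ Icc (0:ℝ) 1 → x.f u ∈ C := by
  rw [← nhdsNE_sup_pure, ← nhdsLT_sup_nhdsGT, eventually_sup, eventually_sup, eventually_pure]
  exact ⟨⟨x.eventually_nhdsLT hs hl, x.eventually_nhdsGT hs hr⟩, fun _ => mem_of_mem_nhds hr⟩

theorem isBounded_image_Icc : IsBounded (x.f '' Icc (0:ℝ) 1) := by
  have hloc : ∀ s : Icc (0:ℝ) 1, ∃ t ∈ 𝓝 s, IsBounded ((fun u : Icc (0:ℝ) 1 => x.f u) '' t) := by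
    rintro ⟨s, hs⟩
    set R := |x.lft s| + |x.f s| + 1
    have hl : ball 0 R ∈ 𝓝 (x.lft s) := isOpen_ball.mem_nhds <| by
      simp only [mem_ball, Real.dist_0_eq_abs, R]; linarith [abs_nonneg (x.f s)]
    have hr : ball 0 R ∈ 𝓝 (x.f s) := isOpen_ball.mem_nhds <| by
      simp only [mem_ball, Real.dist_0_eq_abs, R]; linarith [abs_nonneg (x.lft s)]
    refine ⟨_, continuous_subtype_val.continuousAt.preimage_mem_nhds (x.eventually_nhds hs hl hr),
      (isBounded_ball (x := 0) (r := R)).subset ?_⟩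
    rintro _ ⟨u, hu, rfl⟩
    exact hu u.2
  have := isBounded_image_of_isLocallyBounded_of_isCompact isCompact_univ hloc
  rwa [image_univ, range_comp', Subtype.range_coe] at this

theorem mem_graph_self {t : ℝ} (ht : t ∈ Icc (0:ℝ) 1) : (t, x.f t) ∈ x.graph :=
  ⟨ht, right_mem_uIcc⟩

theorem mem_of_mem_graph {C : Set ℝ} (hC : IsClosed C) (hCo : C.OrdConnected) {u z : ℝ}
    (h : ∀ᶠ v in 𝓝[≤] u, v ∈ Icc (0:ℝ) 1 → x.f v ∈ C) (hz : (u, z) ∈ x.graph) : z ∈ C := by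
  obtain ⟨hu, hz⟩ := hz
  have hfu : x.f u ∈ C := h.self_of_nhdsWithin self_mem_Iic hu
  have hlu : x.lft u ∈ C := by
    rcases hu.1.eq_or_lt with hu0 | hu0
    · rwa [lft, if_pos hu0.ge, hu0]
    refine hC.mem_of_tendsto (x.tendsto_lft ⟨hu0, hu.2⟩) ?_
    filter_upwards [nhdsWithin_mono u Iio_subset_Iic_self h, Ioo_mem_nhdsLT hu0] with v hv hv0
    exact hv ⟨hv0.1.le, hv0.2.le.trans hu.2⟩
  exact hCo.uIcc_subset hlu hfu hz

theorem isBounded_graph : IsBounded x.graph := by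
  obtain ⟨r, hr⟩ := x.isBounded_image_Icc.subset_closedBall 0
  refine ((isBounded_Icc (0:ℝ) 1).prod (isBounded_closedBall (x := 0) (r := r))).subset
    fun p hp => ⟨hp.1, ?_⟩
  rw [Real.closedBall_eq_Icc] at hr ⊢
  exact x.mem_of_mem_graph isClosed_Icc ordConnected_Icc
    (Eventually.of_forall fun v hv => hr (mem_image_of_mem _ hv)) hp

theorem eventually_graph_mem {s : ℝ} {C : Set ℝ} (hC : IsClosed C) (hCo : C.OrdConnected)
    (h : ∀ᶠ u in 𝓝 s, u ∈ Icc (0:ℝ) 1 → x.f u ∈ C) :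
    ∀ᶠ u in 𝓝 s, ∀ z, (u, z) ∈ x.graph → z ∈ C := by
  filter_upwards [eventually_eventually_nhds.2 h] with u hu z hz
  exact x.mem_of_mem_graph hC hCo (nhdsWithin_le_nhds hu) hz

theorem eventually_graph_near {s : ℝ} (hs : s ∈ Icc (0:ℝ) 1) (hc : s ∉ x.Disc) {ε : ℝ}
    (hε : 0 < ε) : ∀ᶠ u in 𝓝 s, ∀ z, (u, z) ∈ x.graph → dist z (x.f s) ≤ ε := by
  have hC : closedBall (x.f s) ε ∈ 𝓝 (x.f s) := closedBall_mem_nhds _ hε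
  have h := x.eventually_nhds hs (x.lft_eq_of_notMem_disc hs hc ▸ hC) hC
  rw [Real.closedBall_eq_Icc] at h
  filter_upwards [x.eventually_graph_mem isClosed_Icc ordConnected_Icc h] with u hu z hz
  rw [← mem_closedBall, Real.closedBall_eq_Icc]
  exact hu z hz

theorem exists_graph_near_uniform {K : Set ℝ} (hK : IsCompact K) (hK01 : K ⊆ Icc (0:ℝ) 1)
    (hKc : ∀ s ∈ K, s ∉ x.Disc) {ε : ℝ} (hε : 0 < ε) :
    ∃ δ > 0, ∀ s ∈ K, ∀ p ∈ x.graph, dist p.1 s < δ → dist p.2 (x.f s) ≤ ε := by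
  set U : K → Set ℝ := fun i => interior {u | ∀ z, (u, z) ∈ x.graph → dist z (x.f i) ≤ ε / 2}
  have hU : ∀ i : K, (i : ℝ) ∈ U i := fun i =>
    mem_interior_iff_mem_nhds.2 (x.eventually_graph_near (hK01 i.2) (hKc i i.2) (half_pos hε))
  have hnear : ∀ i : K, ∀ p ∈ x.graph, p.1 ∈ U i → dist p.2 (x.f i) ≤ ε / 2 :=
    fun i p hp hpU => interior_subset hpU p.2 hp
  obtain ⟨δ, hδ, hball⟩ := lebesgue_number_lemma_of_metric (c := U) hK
    (fun i => isOpen_interior) fun s hs => mem_iUnion.2 ⟨⟨s, hs⟩, hU ⟨s, hs⟩⟩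
  refine ⟨δ, hδ, fun s hs p hp hps => ?_⟩
  obtain ⟨i, hi⟩ := hball s hs
  have hpi := hnear i p hp (hi hps)
  have hsi := hnear i (s, x.f s) (x.mem_graph_self (hK01 hs)) (hi (mem_ball_self hδ))
  calc dist p.2 (x.f s) ≤ dist p.2 (x.f i) + dist (x.f s) (x.f i) := dist_triangle_right _ _ _
    _ ≤ ε / 2 + ε / 2 := add_le_add hpi hsi
    _ = ε := add_halves ε

end Cadlag

theorem infDist_le_dM2 {x y : Cadlag} {a : ℝ × ℝ} (ha : a ∈ x.graph) :
    infDist a y.graph ≤ dM2 x y := by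
  -- an unbounded `⨆` in `ℝ` is `0`, hence the need for `Γ_x` to be bounded
  have hy := y.mem_graph_self (left_mem_Icc.2 zero_le_one)
  obtain ⟨r, hr⟩ := x.isBounded_graph.subset_closedBall (0, y.f 0)
  have hbdd : BddAbove (range fun a : x.graph => infDist (a : ℝ × ℝ) y.graph) :=
    ⟨r, forall_mem_range.2 fun a => (infDist_le_dist_of_mem hy).trans (hr a.2)⟩
  refine le_trans ?_ (le_max_left _ _)
  simp only [← Real.dist_eq, ← Prod.dist_eq, ← infDist_eq_iInf]
  exact le_ciSup (f := fun a : x.graph => infDist (a : ℝ × ℝ) y.graph) hbdd ⟨a, ha⟩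

theorem exists_mem_graph_dist_lt_of_dM2_lt {x y : Cadlag} {η : ℝ} (hd : dM2 x y < η)
    {a : ℝ × ℝ} (ha : a ∈ x.graph) : ∃ b ∈ y.graph, dist a b < η :=
  (infDist_lt_iff ⟨_, y.mem_graph_self (left_mem_Icc.2 zero_le_one)⟩).1
    ((infDist_le_dM2 ha).trans_lt hd)

theorem exists_eventually_dist_lt_of_tendsto_dM2 {xn : ℕ → Cadlag} {x : Cadlag}
    (h : Tendsto (fun n => dM2 (xn n) x) atTop (𝓝 0)) {K : Set ℝ} (hK : IsCompact K)
    (hK01 : K ⊆ Icc (0:ℝ) 1) (hKc : ∀ s ∈ K, s ∉ x.Disc) {ε : ℝ} (hε : 0 < ε) :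
    ∃ δ > 0, ∀ᶠ n in atTop, ∀ s ∈ K, ∀ u ∈ Icc (0:ℝ) 1, dist u s < δ →
      dist ((xn n).f u) (x.f s) < ε := by
  obtain ⟨δ, hδ, hnear⟩ := x.exists_graph_near_uniform hK hK01 hKc (half_pos hε)
  refine ⟨δ / 2, half_pos hδ, ?_⟩
  filter_upwards [h.eventually (gt_mem_nhds (lt_min (half_pos hδ) (half_pos hε)))]
    with n hn s hs u hu hus
  obtain ⟨p, hp, hdist⟩ := exists_mem_graph_dist_lt_of_dM2_lt hn ((xn n).mem_graph_self hu)
  rw [Prod.dist_eq, max_lt_iff, lt_min_iff, lt_min_iff] at hdist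
  have hps : dist p.1 s < δ := calc
    dist p.1 s ≤ dist u p.1 + dist u s := dist_triangle_left _ _ _
    _ < δ / 2 + δ / 2 := add_lt_add hdist.1.1 hus
    _ = δ := add_halves δ
  calc dist ((xn n).f u) (x.f s) ≤ dist ((xn n).f u) p.2 + dist p.2 (x.f s) := dist_triangle _ _ _
    _ < ε / 2 + ε / 2 := add_lt_add_of_lt_of_le hdist.2.2 (hnear s hs p hp hps)
    _ = ε := add_halves ε

/-- `M₂` convergence implies local uniform convergence at continuity points of the limit:
if `d_{M₂}(xₙ,x) → 0` and `t ∈ (0,1)` is a continuity point of `x`, then `xₙ(tₙ) → x(t)`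
for every sequence `tₙ → t` in `[0,1]`; moreover `xₙ → x` uniformly on every compact
subinterval of `[0,1]` consisting of continuity points of `x`. -/
theorem stmt18 (xn : ℕ → Cadlag) (x : Cadlag)
    (h : Tendsto (fun n => dM2 (xn n) x) atTop (𝓝 0))
    (t : ℝ) (ht : t ∈ Set.Ioo (0:ℝ) 1) (hc : t ∉ x.Disc) :
    (∀ tn : ℕ → ℝ, (∀ n, tn n ∈ Set.Icc (0:ℝ) 1) → Tendsto tn atTop (𝓝 t) →
      Tendsto (fun n => (xn n).f (tn n)) atTop (𝓝 (x.f t))) ∧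
    (∀ a b : ℝ, 0 ≤ a → a ≤ b → b ≤ 1 → (∀ s ∈ Set.Icc a b, s ∉ x.Disc) →
      Tendsto (fun n => ⨆ s : Set.Icc a b, |(xn n).f s - x.f s|) atTop (𝓝 0)) := by
  refine ⟨fun tn htn htend => ?_, fun a b ha _ hb hcont => ?_⟩
  · refine Metric.tendsto_nhds.2 fun ε hε => ?_
    obtain ⟨δ, hδ, hev⟩ := exists_eventually_dist_lt_of_tendsto_dM2 h isCompact_singleton
      (singleton_subset_iff.2 (Ioo_subset_Icc_self ht)) (fun s hs => hs ▸ hc) hε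
    filter_upwards [hev, Metric.tendsto_nhds.1 htend δ hδ] with n hn htn_near
    exact hn t rfl (tn n) (htn n) htn_near
  · refine Metric.tendsto_nhds.2 fun ε hε => ?_
    obtain ⟨δ, hδ, hev⟩ := exists_eventually_dist_lt_of_tendsto_dM2 h isCompact_Icc
      (Icc_subset_Icc ha hb) hcont (half_pos hε)
    filter_upwards [hev] with n hn
    have hsup : (⨆ s : Icc a b, |(xn n).f s - x.f s|) ≤ ε / 2 :=
      Real.iSup_le (fun s => (hn s s.2 s (Icc_subset_Icc ha hb s.2) (by simpa using hδ)).le)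
        (half_pos hε).le
    rw [Real.dist_0_eq_abs, abs_of_nonneg (Real.iSup_nonneg fun _ => abs_nonneg _)]
    exact hsup.trans_lt (half_lt_self hε)
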